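/- Let S and A be nonempty finite sets, let γ ∈ [0,1), let π : S → PMF(A) be a policy, let ρ⁰ ∈ PMF(S), and let P, Q : S → A → PMF(S) be two transition kernels. Let d^π(·, P) and d^π(·, Q) be the discounted occupancy measures d^π(s, K) = (1−γ) Σ_{k≥0} γ^k μ_k^K(s) with μ₀^K = ρ⁰ and μ_{k+1}^K(s') = Σ_s μ_k^K(s) Σ_a π(s)(a) K(s,a)(s'). Then Σ_{s ∈ S} |d^π(s, P) − d^π(s, Q)| ≤ γ(1−γ)^{-1} · Σ_{s' ∈ S} | Σ_{s ∈ S} ( P^π(s'|s) − Q^π(s'|s) ) · d^π(s, P) |, where P^π(s'|s) = Σ_a π(s)(a) P(s,a)(s') and Q^π(s'|s) = Σ_a π(s)(a) Q(s,a)(s'). -/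

import Mathlib

/-! Both occupancy measures solve the flow equation `d = (1 - γ) ρ + γ d K^π` (row vectors).
Subtracting the two, `e = d^P - d^Q` satisfies `e = γ (m + e Q^π)` with mismatch
`m = d^P (P^π - Q^π)`. A row-stochastic matrix is nonexpansive in `ℓ₁` under right
multiplication, so `‖e‖₁ ≤ γ ‖m‖₁ + γ ‖e‖₁`, and solving for `‖e‖₁` gives the bound. -/

noncomputable section

/-- Policy-mixed one-step state-to-state kernel: `K^π(s'|s) = ∑_a π(s)(a) · K(s,a)(s')`. -/
def kerPi {S A : Type*} [Fintype A] (π : S → PMF A) (K : S → A → PMF S)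
    (s s' : S) : ℝ :=
  ∑ a : A, ((π s) a).toReal * ((K s a) s').toReal

/-- State distribution at time step `k` under policy `π`, kernel `K` and initial
distribution `ρ`: `μ₀ = ρ`, `μ_{k+1}(s') = ∑_s μ_k(s) · ∑_a π(s)(a) · K(s,a)(s')`. -/
def stateDist {S A : Type*} [Fintype S] [Fintype A] (π : S → PMF A)
    (K : S → A → PMF S) (ρ : PMF S) : ℕ → S → ℝ
  | 0 => fun s => (ρ s).toReal
  | (k + 1) => fun s' => ∑ s : S, stateDist π K ρ k s * kerPi π K s s'

/-- Discounted state occupancy measure `d^π(s) = (1-γ) ∑_{k≥0} γ^k μ_k(s)`. -/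
def occ {S A : Type*} [Fintype S] [Fintype A] (γ : ℝ) (π : S → PMF A)
    (K : S → A → PMF S) (ρ : PMF S) (s : S) : ℝ :=
  (1 - γ) * ∑' k : ℕ, γ ^ k * stateDist π K ρ k s

/-- Expected discounted return
`J(π, K, r) = ∑_{k≥0} γ^k ∑_s μ_k(s) ∑_a π(s)(a) r(s,a)`. -/
def ret {S A : Type*} [Fintype S] [Fintype A] (γ : ℝ) (π : S → PMF A)
    (K : S → A → PMF S) (ρ : PMF S) (r : S × A → ℝ) : ℝ :=
  ∑' k : ℕ, γ ^ k * ∑ s : S, stateDist π K ρ k s * ∑ a : A, ((π s) a).toReal * r (s, a)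

open Finset Matrix

section RowStochastic

variable {n : Type*} [Fintype n] [DecidableEq n] {M : Matrix n n ℝ}

theorem sum_abs_vecMul_le_of_mem_rowStochastic (hM : M ∈ rowStochastic ℝ n) (x : n → ℝ) :
    ∑ j, |(x ᵥ* M) j| ≤ ∑ i, |x i| :=
  calc ∑ j, |(x ᵥ* M) j| ≤ ∑ j, ∑ i, |x i| * M i j :=
        sum_le_sum fun j _ => (abs_sum_le_sum_abs _ _).trans_eq <|
          sum_congr rfl fun i _ => by rw [abs_mul, abs_of_nonneg (hM.1 i j)]
    _ = ∑ i, |x i| := by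
        rw [sum_comm]
        simp only [← mul_sum, sum_row_of_mem_rowStochastic hM, mul_one]

theorem sum_abs_le_of_eq_smul_add_vecMul (hM : M ∈ rowStochastic ℝ n) {γ : ℝ} (hγ0 : 0 ≤ γ)
    (hγ1 : γ < 1) {e m : n → ℝ} (he : e = γ • (m + e ᵥ* M)) :
    ∑ i, |e i| ≤ γ * (1 - γ)⁻¹ * ∑ i, |m i| := by
  have hrec : ∑ i, |e i| ≤ γ * ∑ i, |m i| + γ * ∑ i, |e i| :=
    calc ∑ i, |e i| = γ * ∑ i, |m i + (e ᵥ* M) i| := by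
          conv_lhs => rw [he]
          simp only [Pi.smul_apply, Pi.add_apply, smul_eq_mul, abs_mul, abs_of_nonneg hγ0, mul_sum]
      _ ≤ γ * (∑ i, |m i| + ∑ i, |e i|) := by
          gcongr
          calc ∑ i, |m i + (e ᵥ* M) i| ≤ ∑ i, (|m i| + |(e ᵥ* M) i|) :=
                sum_le_sum fun i _ => abs_add_le _ _
            _ = ∑ i, |m i| + ∑ i, |(e ᵥ* M) i| := sum_add_distrib
            _ ≤ ∑ i, |m i| + ∑ i, |e i| :=
                add_le_add le_rfl (sum_abs_vecMul_le_of_mem_rowStochastic hM e)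
      _ = γ * ∑ i, |m i| + γ * ∑ i, |e i| := mul_add _ _ _
  rw [mul_comm γ, mul_assoc, le_inv_mul_iff₀ (sub_pos.2 hγ1)]
  linarith

end RowStochastic

theorem PMF.sum_toReal_eq_one {α : Type*} [Fintype α] (p : PMF α) : ∑ a, (p a).toReal = 1 := by
  rw [← ENNReal.toReal_sum fun a _ => p.apply_ne_top a,
    ← tsum_fintype (L := SummationFilter.unconditional α), p.tsum_coe, ENNReal.toReal_one]

section Occupancy

variable {S A : Type*} [Fintype S] [Fintype A] (π : S → PMF A) (K : S → A → PMF S) (ρ : PMF S)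

theorem kerPi_mem_rowStochastic [DecidableEq S] : of (kerPi π K) ∈ rowStochastic ℝ S := by
  refine mem_rowStochastic_iff_sum.2 ⟨fun s s' => sum_nonneg fun a _ => by positivity, fun s => ?_⟩
  simp only [of_apply, kerPi]
  rw [sum_comm]
  simp only [← mul_sum, PMF.sum_toReal_eq_one, mul_one]

theorem stateDist_succ (k : ℕ) :
    stateDist π K ρ (k + 1) = stateDist π K ρ k ᵥ* of (kerPi π K) :=
  rfl

theorem stateDist_nonneg (k : ℕ) (s : S) : 0 ≤ stateDist π K ρ k s := by
  classical
  induction k generalizing s with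
  | zero => exact ENNReal.toReal_nonneg
  | succ k ih =>
    rw [stateDist_succ]
    exact nonneg_vecMul_of_mem_rowStochastic (kerPi_mem_rowStochastic π K) ih s

theorem sum_stateDist (k : ℕ) : ∑ s, stateDist π K ρ k s = 1 := by
  classical
  induction k with
  | zero => exact PMF.sum_toReal_eq_one ρ
  | succ k ih =>
    rw [← dotProduct_one] at ih ⊢
    rw [stateDist_succ]
    exact vecMul_dotProduct_one_eq_one_rowStochastic (kerPi_mem_rowStochastic π K) ih

theorem stateDist_le_one (k : ℕ) (s : S) : stateDist π K ρ k s ≤ 1 :=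
  sum_stateDist π K ρ k ▸ single_le_sum (fun t _ => stateDist_nonneg π K ρ k t) (mem_univ s)

variable {γ : ℝ}

theorem summable_pow_mul_stateDist (hγ0 : 0 ≤ γ) (hγ1 : γ < 1) (s : S) :
    Summable fun k => γ ^ k * stateDist π K ρ k s :=
  (summable_geometric_of_lt_one hγ0 hγ1).of_nonneg_of_le
    (fun k => mul_nonneg (pow_nonneg hγ0 k) (stateDist_nonneg π K ρ k s))
    (fun k => mul_le_of_le_one_right (pow_nonneg hγ0 k) (stateDist_le_one π K ρ k s))

theorem occ_eq_flow (hγ0 : 0 ≤ γ) (hγ1 : γ < 1) :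
    occ γ π K ρ = (1 - γ) • (fun s => (ρ s).toReal) + γ • (occ γ π K ρ ᵥ* of (kerPi π K)) := by
  have hsum := summable_pow_mul_stateDist π K ρ hγ0 hγ1
  ext s'
  have hshift : ∑' k, γ ^ k * stateDist π K ρ (k + 1) s' =
      ∑ s, (∑' k, γ ^ k * stateDist π K ρ k s) * kerPi π K s s' := by
    simp only [stateDist_succ, vecMul, dotProduct, of_apply, mul_sum, ← mul_assoc]
    rw [Summable.tsum_finsetSum fun s _ => (hsum s).mul_right _]
    simp only [tsum_mul_right]
  simp only [occ, Pi.add_apply, Pi.smul_apply, smul_eq_mul, vecMul, dotProduct, of_apply]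
  rw [(hsum s').tsum_eq_zero_add]
  simp only [pow_succ', mul_assoc, tsum_mul_left, hshift, ← mul_sum]
  rw [pow_zero, one_mul, stateDist]
  ring

end Occupancy

theorem occ_l1_le_mismatch_general {S A : Type*} [Fintype S] [Fintype A]
    (γ : ℝ) (hγ0 : 0 ≤ γ) (hγ1 : γ < 1)
    (π : S → PMF A) (ρ : PMF S)
    (P Q : S → A → PMF S) :
    ∑ s : S, |occ γ π P ρ s - occ γ π Q ρ s| ≤
      γ * (1 - γ)⁻¹ *
        ∑ s' : S, |∑ s : S, (kerPi π P s s' - kerPi π Q s s') * occ γ π P ρ s| := by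
  classical
  refine sum_abs_le_of_eq_smul_add_vecMul (kerPi_mem_rowStochastic π Q) hγ0 hγ1
    (e := occ γ π P ρ - occ γ π Q ρ) ?_
  ext s'
  have hP := congrFun (occ_eq_flow π P ρ hγ0 hγ1) s'
  have hQ := congrFun (occ_eq_flow π Q ρ hγ0 hγ1) s'
  simp only [Pi.add_apply, Pi.sub_apply, Pi.smul_apply, smul_eq_mul, vecMul, dotProduct,
    of_apply] at hP hQ ⊢
  rw [hP, hQ]
  simp only [sub_mul, sum_sub_distrib, mul_comm (kerPi π _ _ s')]
  ring

/-- **step (d) in the proof of Theorem 2.** The ℓ₁ distance between the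
occupancy measures of two kernels is bounded by `γ(1-γ)⁻¹` times the ℓ₁ norm of the
mismatch of the policy-mixed one-step transition operators applied to one occupancy. -/
theorem occ_l1_le_mismatch {S A : Type*} [Fintype S] [Fintype A] [Nonempty S] [Nonempty A]
    (γ : ℝ) (hγ0 : 0 ≤ γ) (hγ1 : γ < 1)
    (π : S → PMF A) (ρ : PMF S)
    (P Q : S → A → PMF S) :
    ∑ s : S, |occ γ π P ρ s - occ γ π Q ρ s| ≤
      γ * (1 - γ)⁻¹ *
        ∑ s' : S, |∑ s : S, (kerPi π P s s' - kerPi π Q s s') * occ γ π P ρ s| :=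
  occ_l1_le_mismatch_general γ hγ0 hγ1 π ρ P Q
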